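/- arXiv:1907.02458 — 2 statements merged into one kernel-verified Lean document; each statement's English description precedes it below -/
import Mathlib

section
/- Let (E_k)_{k≥0} be a nondecreasing sequence of nonnegative reals tending to +∞. If liminf_{k→∞} E_k / (ln k)^q > 0 for some q > 2, then lim_{λ→0⁺} (∑_{k=0}^∞ e^{−λ E_k})^λ = 1. -/
/-!
The growth hypothesis gives `E k ≥ c (log k)^q` for large `k`, hence `exp (-l E k) ≤ k⁻²` as soon as
`log k ≥ (2 / (c l))^(1/(q-1))`. Splitting the series there bounds it by
`K · exp ((2 / (c l))^(1/(q-1)))` for a constant `K`, while its first term bounds it below by `exp (-l E 0)`. So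
`l · log (∑ exp (-l E k))` is squeezed between `-l² E 0` and `O(l^(1 - 1/(q-1)))`, and both tend to
`0` because `q > 2`.
-/

open Filter Real Topology

lemma exists_pos_eventually_mul_le_of_liminf_div_pos {ι : Type*} {L : Filter ι} {f g : ι → ℝ}
    (hf : ∀ᶠ i in L, 0 ≤ f i) (hg : ∀ᶠ i in L, 0 < g i)
    (h : 0 < L.liminf (fun i => f i / g i)) : ∃ c > 0, ∀ᶠ i in L, c * g i ≤ f i := by
  have hbdd : L.IsBoundedUnder (· ≥ ·) (fun i => f i / g i) :=
    ⟨0, eventually_map.2 <| (hf.and hg).mono fun i hi => div_nonneg hi.1 hi.2.le⟩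
  refine ⟨_, half_pos h, ?_⟩
  filter_upwards [eventually_lt_of_lt_liminf (half_lt_self h) hbdd, hg] with i hi hgi
  exact ((lt_div_iff₀ hgi).1 hi).le

lemma exp_neg_mul_le_one_div_sq {c q l e x : ℝ} (hc : 0 < c) (hq : 1 < q) (hl : 0 < l)
    (hx : (2 / c / l) ^ (q - 1)⁻¹ ≤ log x) (he : c * log x ^ q ≤ e) :
    exp (-l * e) ≤ 1 / x ^ 2 := by
  have hlog : 0 < log x := (rpow_pos_of_pos (by positivity) _).trans_le hx
  have hpow : 2 / c / l ≤ log x ^ (q - 1) :=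
    (rpow_inv_le_iff_of_pos (by positivity) hlog.le (by linarith)).1 hx
  have h2 : 2 * log x ≤ l * e := calc
    2 * log x ≤ l * c * log x ^ (q - 1) * log x := by
      gcongr
      rw [div_div, div_le_iff₀ (by positivity)] at hpow
      linarith
    _ = l * (c * log x ^ q) := by
      rw [mul_assoc, ← rpow_add_one hlog.ne', sub_add_cancel]; ring
    _ ≤ l * e := by gcongr
  have hx0 : 0 < |x| := abs_pos.2 fun h => by simp [h] at hlog
  calc exp (-l * e) ≤ exp (-(2 * log |x|)) := by rw [log_abs]; exact exp_le_exp.2 (by linarith)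
    _ = 1 / x ^ 2 := by
      rw [exp_neg, ← log_rpow hx0, exp_log (by positivity), one_div, rpow_two, sq_abs]

lemma summable_and_tsum_le_of_le_one {f g : ℕ → ℝ} (M : ℕ) (hf0 : ∀ k, 0 ≤ f k)
    (hf1 : ∀ k, f k ≤ 1) (hfg : ∀ k, M ≤ k → f k ≤ g k) (hg0 : ∀ k, 0 ≤ g k)
    (hg : Summable g) : Summable f ∧ ∑' k, f k ≤ M + ∑' k, g k := by
  have htail : ∀ n, f (n + M) ≤ g (n + M) := fun n => hfg _ (Nat.le_add_left M n)
  have hgM : Summable fun n => g (n + M) := (summable_nat_add_iff M).2 hg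
  have hfM : Summable fun n => f (n + M) := hgM.of_nonneg_of_le (fun n => hf0 _) htail
  have hf : Summable f := (summable_nat_add_iff M).1 hfM
  refine ⟨hf, ?_⟩
  rw [← hf.sum_add_tsum_nat_add M, ← hg.sum_add_tsum_nat_add M]
  have hhead : ∑ i ∈ Finset.range M, f i ≤ M := by
    simpa using Finset.sum_le_sum fun i (_ : i ∈ Finset.range M) => hf1 i
  have := hfM.tsum_le_tsum htail hgM
  have := Finset.sum_nonneg fun i (_ : i ∈ Finset.range M) => hg0 i
  linarith

lemma summable_and_tsum_exp_neg_mul_le {E : ℕ → ℝ} {c q l : ℝ} {N : ℕ} (hE : ∀ k, 0 ≤ E k)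
    (hc : 0 < c) (hq : 1 < q) (hN : ∀ k, N ≤ k → c * log k ^ q ≤ E k) (hl : 0 < l) :
    Summable (fun k => exp (-l * E k)) ∧
      ∑' k, exp (-l * E k) ≤
        exp ((2 / c / l) ^ (q - 1)⁻¹) * (N + 2 + ∑' k : ℕ, 1 / (k : ℝ) ^ 2) := by
  set b := (2 / c / l) ^ (q - 1)⁻¹
  set M := max N ⌈exp b⌉₊
  have htail : ∀ k, M ≤ k → exp (-l * E k) ≤ 1 / (k : ℝ) ^ 2 := by
    intro k hk
    have hbk : exp b ≤ k := (Nat.le_ceil _).trans (by exact_mod_cast le_of_max_le_right hk)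
    refine exp_neg_mul_le_one_div_sq hc hq hl ?_ (hN k (le_of_max_le_left hk))
    exact (Real.le_log_iff_exp_le ((exp_pos b).trans_le hbk)).2 hbk
  obtain ⟨hsum, hle⟩ := summable_and_tsum_le_of_le_one M (fun k => (exp_pos _).le)
    (fun k => exp_le_one_iff.2 (by nlinarith [hE k])) htail (fun k => by positivity)
    (summable_one_div_nat_pow.2 one_lt_two)
  refine ⟨hsum, hle.trans ?_⟩
  have hM : (M : ℝ) ≤ N + exp b + 1 := by
    have hM : M ≤ N + ⌈exp b⌉₊ := max_le le_self_add le_add_self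
    have := Nat.ceil_lt_add_one (exp_pos b).le
    rw [← Nat.cast_le (α := ℝ), Nat.cast_add] at hM
    linarith
  have hb : 1 ≤ exp b := one_le_exp (rpow_nonneg (by positivity) _)
  have hS : 0 ≤ ∑' k : ℕ, 1 / (k : ℝ) ^ 2 := tsum_nonneg fun k => by positivity
  nlinarith [(N.cast_nonneg : (0 : ℝ) ≤ N)]

lemma tendsto_mul_div_rpow_nhdsGT_zero {a s : ℝ} (ha : 0 ≤ a) (hs : s < 1) :
    Tendsto (fun l => l * (a / l) ^ s) (𝓝[>] 0) (𝓝 0) := by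
  have hpow : Tendsto (fun l : ℝ => a ^ s * l ^ (1 - s)) (𝓝[>] 0) (𝓝 0) := by
    have := tendsto_nhdsWithin_of_tendsto_nhds (s := Set.Ioi 0)
      ((continuousAt_rpow_const 0 (1 - s) (Or.inr (by linarith))).tendsto.const_mul (a ^ s))
    rwa [zero_rpow (by linarith), mul_zero] at this
  refine hpow.congr' ?_
  filter_upwards [self_mem_nhdsWithin] with l (hl : 0 < l)
  rw [div_rpow ha hl.le, rpow_sub hl, rpow_one]
  field_simp

lemma tendsto_rpow_self_nhdsGT_zero_of_exp_le_of_le_exp {Z a B : ℝ → ℝ}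
    (hlow : ∀ l > 0, exp (a l) ≤ Z l) (hup : ∀ l > 0, Z l ≤ exp (B l))
    (ha : Tendsto (fun l => l * a l) (𝓝[>] 0) (𝓝 0))
    (hB : Tendsto (fun l => l * B l) (𝓝[>] 0) (𝓝 0)) :
    Tendsto (fun l => Z l ^ l) (𝓝[>] 0) (𝓝 1) := by
  have hZ : ∀ l > 0, 0 < Z l := fun l hl => (exp_pos _).trans_le (hlow l hl)
  have hlog : Tendsto (fun l => l * log (Z l)) (𝓝[>] 0) (𝓝 0) := by
    refine tendsto_of_tendsto_of_tendsto_of_le_of_le' ha hB ?_ ?_ <;>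
      filter_upwards [self_mem_nhdsWithin] with l (hl : 0 < l) <;> gcongr
    · exact (Real.le_log_iff_exp_le (hZ l hl)).2 (hlow l hl)
    · exact (Real.log_le_iff_le_exp (hZ l hl)).2 (hup l hl)
  have hexp := (continuous_exp.tendsto 0).comp hlog
  rw [exp_zero] at hexp
  refine hexp.congr' ?_
  filter_upwards [self_mem_nhdsWithin] with l (hl : 0 < l)
  rw [Function.comp_apply, rpow_def_of_pos (hZ l hl), mul_comm]

theorem Hcond_plus_of_growth_general (E : ℕ → ℝ)
    (hpos : ∀ k, 0 ≤ E k)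
    (hgrowth : ∃ q : ℝ, 2 < q ∧
      0 < Filter.atTop.liminf (fun k : ℕ => E k / (Real.log k) ^ q)) :
    Filter.Tendsto (fun l : ℝ => (∑' k : ℕ, Real.exp (-l * E k)) ^ l)
      (nhdsWithin 0 (Set.Ioi 0)) (nhds 1) := by
  obtain ⟨q, hq, hlim⟩ := hgrowth
  have hlog_pow : ∀ᶠ k : ℕ in atTop, 0 < log k ^ q := (eventually_gt_atTop 1).mono
    fun k hk => rpow_pos_of_pos (log_pos (by exact_mod_cast hk)) q
  obtain ⟨c, hc, hcE⟩ :=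
    exists_pos_eventually_mul_le_of_liminf_div_pos (.of_forall hpos) hlog_pow hlim
  obtain ⟨N, hN⟩ := eventually_atTop.1 hcE
  have hZ := fun l (hl : 0 < l) => summable_and_tsum_exp_neg_mul_le hpos hc (by linarith) hN hl
  set K := (N : ℝ) + 2 + ∑' k : ℕ, 1 / (k : ℝ) ^ 2
  have hK : 0 < K := by positivity
  refine tendsto_rpow_self_nhdsGT_zero_of_exp_le_of_le_exp (a := fun l => -l * E 0)
    (B := fun l => (2 / c / l) ^ (q - 1)⁻¹ + log K)
    (fun l hl => (hZ l hl).1.le_tsum 0 fun k _ => (exp_pos _).le)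
    (fun l hl => by rw [exp_add, exp_log hK]; exact (hZ l hl).2) ?_ ?_
  · exact tendsto_nhdsWithin_of_tendsto_nhds <|
      (by fun_prop : Continuous fun l : ℝ => l * (-l * E 0)).tendsto' 0 0 (by simp)
  · simpa only [mul_add, add_zero] using (tendsto_mul_div_rpow_nhdsGT_zero
      (by positivity) (inv_lt_one_of_one_lt₀ (by linarith : 1 < q - 1))).add
      (tendsto_nhdsWithin_of_tendsto_nhds <|
        (by fun_prop : Continuous fun l : ℝ => l * log K).tendsto' 0 0 (by simp))

theorem Hcond_plus_of_growth (E : ℕ → ℝ)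
    (hmono : Monotone E) (hpos : ∀ k, 0 ≤ E k)
    (htop : Filter.Tendsto E Filter.atTop Filter.atTop)
    (hgrowth : ∃ q : ℝ, 2 < q ∧
      0 < Filter.atTop.liminf (fun k : ℕ => E k / (Real.log k) ^ q)) :
    Filter.Tendsto (fun l : ℝ => (∑' k : ℕ, Real.exp (-l * E k)) ^ l)
      (nhdsWithin 0 (Set.Ioi 0)) (nhds 1) :=
  Hcond_plus_of_growth_general E hpos hgrowth
end

section
/- Let f be a real-valued function on a convex subset S of a real vector space satisfying −a·h₂(p) ≤ f(p·ρ + (1−p)·σ) − p·f(ρ) − (1−p)·f(σ) ≤ b·h₂(p) for all ρ, σ ∈ S and p ∈ (0,1), where a, b ≥ 0 and h₂ is the binary entropy. Suppose ρ, ϱ, σ₁, σ₂ ∈ S and t ∈ (0,1] satisfy (1/(1+t))·ρ + (t/(1+t))·σ₁ = (1/(1+t))·ϱ + (t/(1+t))·σ₂. Then |f(ϱ) − f(ρ)| ≤ t·|f(σ₂) − f(σ₁)| + (a+b)·g(t), where g(t) = (1+t)·h₂(t/(1+t)). -/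
noncomputable def g (x : ℝ) : ℝ := (x + 1) * Real.log (x + 1) - x * Real.log x

noncomputable def h2 (p : ℝ) : ℝ := -(p * Real.log p) - (1 - p) * Real.log (1 - p)

/-!
Mixing `ρ` with `σ₁` and `ϱ` with `σ₂` in the proportion `1 : t` gives the same point, so the two
almost-affinity estimates at that point, subtracted, bound `|(f ϱ - f ρ) + t (f σ₂ - f σ₁)|` by
`(1 + t) (a + b) h₂(1/(1+t)) = (a + b) g(t)`; the triangle inequality then isolates `f ϱ - f ρ`.
-/

theorem g_eq_one_add_mul_h2 {t : ℝ} (ht : 0 < t) : g t = (1 + t) * h2 (1 / (1 + t)) := by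
  have h1t : 0 < 1 + t := by linarith
  have hcompl : 1 - 1 / (1 + t) = t / (1 + t) := by field_simp; ring
  rw [g, h2, hcompl, one_div, Real.log_inv, Real.log_div ht.ne' h1t.ne', add_comm t 1]
  field_simp
  ring

def AlmostAffineOn {V : Type*} [AddCommGroup V] [Module ℝ V]
    (S : Set V) (f : V → ℝ) (ε δ : ℝ → ℝ) : Prop :=
  ∀ ρ ∈ S, ∀ σ ∈ S, ∀ p ∈ Set.Ioo (0 : ℝ) 1,
    -ε p ≤ f (p • ρ + (1 - p) • σ) - p * f ρ - (1 - p) * f σ ∧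
    f (p • ρ + (1 - p) • σ) - p * f ρ - (1 - p) * f σ ≤ δ p

namespace AlmostAffineOn

variable {V : Type*} [AddCommGroup V] [Module ℝ V] {S : Set V} {f : V → ℝ} {ε δ : ℝ → ℝ}
  {ρ ϱ σ₁ σ₂ : V}

theorem abs_convexComb_sub_le (hf : AlmostAffineOn S f ε δ)
    (hρ : ρ ∈ S) (hϱ : ϱ ∈ S) (hσ₁ : σ₁ ∈ S) (hσ₂ : σ₂ ∈ S) {p : ℝ} (hp : p ∈ Set.Ioo (0 : ℝ) 1)
    (hmix : p • ρ + (1 - p) • σ₁ = p • ϱ + (1 - p) • σ₂) :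
    |p * (f ϱ - f ρ) + (1 - p) * (f σ₂ - f σ₁)| ≤ ε p + δ p := by
  obtain ⟨hρ_lo, hρ_hi⟩ := hf ρ hρ σ₁ hσ₁ p hp
  obtain ⟨hϱ_lo, hϱ_hi⟩ := hf ϱ hϱ σ₂ hσ₂ p hp
  rw [hmix] at hρ_lo hρ_hi
  rw [abs_le]
  constructor <;> linarith

theorem abs_sub_le (hf : AlmostAffineOn S f ε δ)
    (hρ : ρ ∈ S) (hϱ : ϱ ∈ S) (hσ₁ : σ₁ ∈ S) (hσ₂ : σ₂ ∈ S) {t : ℝ} (ht : 0 < t)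
    (hmix : (1 / (1 + t)) • ρ + (t / (1 + t)) • σ₁ = (1 / (1 + t)) • ϱ + (t / (1 + t)) • σ₂) :
    |f ϱ - f ρ| ≤ t * |f σ₂ - f σ₁| + (1 + t) * (ε (1 / (1 + t)) + δ (1 / (1 + t))) := by
  have h1t : 0 < 1 + t := by linarith
  have hcompl : 1 - 1 / (1 + t) = t / (1 + t) := by field_simp; ring
  have hp : 1 / (1 + t) ∈ Set.Ioo (0 : ℝ) 1 :=
    ⟨by positivity, (div_lt_one h1t).2 (by linarith)⟩
  have hconv := hf.abs_convexComb_sub_le hρ hϱ hσ₁ hσ₂ hp (by rwa [hcompl])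
  set X := f ϱ - f ρ
  set Y := f σ₂ - f σ₁
  have htelescope : X + t * Y = (1 + t) * (1 / (1 + t) * X + (1 - 1 / (1 + t)) * Y) := by
    field_simp
    ring
  calc |X| = |(X + t * Y) - t * Y| := by rw [add_sub_cancel_right]
    _ ≤ |X + t * Y| + |t * Y| := abs_sub _ _
    _ = t * |Y| + (1 + t) * |1 / (1 + t) * X + (1 - 1 / (1 + t)) * Y| := by
      rw [htelescope, abs_mul, abs_mul, abs_of_pos h1t, abs_of_pos ht, add_comm]
    _ ≤ t * |Y| + (1 + t) * (ε (1 / (1 + t)) + δ (1 / (1 + t))) := by gcongr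

end AlmostAffineOn

theorem afw_core_step_general {V : Type*} [AddCommGroup V] [Module ℝ V]
    (S : Set V) (f : V → ℝ) (a b : ℝ)
    (hf : ∀ ρ ∈ S, ∀ σ ∈ S, ∀ p ∈ Set.Ioo (0 : ℝ) 1,
      -(a * h2 p) ≤ f (p • ρ + (1 - p) • σ) - p * f ρ - (1 - p) * f σ ∧
      f (p • ρ + (1 - p) • σ) - p * f ρ - (1 - p) * f σ ≤ b * h2 p)
    (ρ ϱ σ₁ σ₂ : V) (hρ : ρ ∈ S) (hϱ : ϱ ∈ S) (hσ₁ : σ₁ ∈ S) (hσ₂ : σ₂ ∈ S)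
    (t : ℝ) (ht : t ∈ Set.Ioc (0 : ℝ) 1)
    (hid : (1 / (1 + t)) • ρ + (t / (1 + t)) • σ₁
         = (1 / (1 + t)) • ϱ + (t / (1 + t)) • σ₂) :
    |f ϱ - f ρ| ≤ t * |f σ₂ - f σ₁| + (a + b) * g t := by
  have hf' : AlmostAffineOn S f (fun p => a * h2 p) (fun p => b * h2 p) := hf
  have key := hf'.abs_sub_le hρ hϱ hσ₁ hσ₂ ht.1 hid
  rw [g_eq_one_add_mul_h2 ht.1]
  linarith

theorem afw_core_step {V : Type*} [AddCommGroup V] [Module ℝ V]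
    (S : Set V) (hS : Convex ℝ S) (f : V → ℝ) (a b : ℝ) (ha : 0 ≤ a) (hb : 0 ≤ b)
    (hf : ∀ ρ ∈ S, ∀ σ ∈ S, ∀ p ∈ Set.Ioo (0 : ℝ) 1,
      -(a * h2 p) ≤ f (p • ρ + (1 - p) • σ) - p * f ρ - (1 - p) * f σ ∧
      f (p • ρ + (1 - p) • σ) - p * f ρ - (1 - p) * f σ ≤ b * h2 p)
    (ρ ϱ σ₁ σ₂ : V) (hρ : ρ ∈ S) (hϱ : ϱ ∈ S) (hσ₁ : σ₁ ∈ S) (hσ₂ : σ₂ ∈ S)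
    (t : ℝ) (ht : t ∈ Set.Ioc (0 : ℝ) 1)
    (hid : (1 / (1 + t)) • ρ + (t / (1 + t)) • σ₁
         = (1 / (1 + t)) • ϱ + (t / (1 + t)) • σ₂) :
    |f ϱ - f ρ| ≤ t * |f σ₂ - f σ₁| + (a + b) * g t :=
  afw_core_step_general S f a b hf ρ ϱ σ₁ σ₂ hρ hϱ hσ₁ hσ₂ t ht hid
end
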